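/- For every n ≥ 1, n! · Σ_{F ∈ PF(n)} ∏_{v ∈ F} (1 − 1/h_v)^{h_v − 1} = (n+1)^{n-1}, where PF(n) is the set of plane forests with n vertices. -/

import Mathlib

/-!
Cutting a plane forest with `n + 1` vertices into its first tree, whose root has hook length
`a + 1` when the root's subforest has `a` vertices, and the remaining forest with `b = n - a`
vertices shows that the weight sums `W n` satisfy `W 0 = 1` and
`W (n + 1) = ∑_{a + b = n} (1 - 1/(a + 1))^a W a W b`.
The numbers `(n + 1)^(n - 1) / n!` obey the same recursion: cleared of factorials, it is the case
`x = -1`, `y = 1` of Abel's identity `∑ C(n, k) A_k(x) A_{n-k}(y) = A_n(x + y)` for the Abel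
polynomials `A_k(x) = x (x + k)^(k - 1)`. That identity reduces to the vanishing of the `m`-th
forward difference of `r ↦ r^(m - 1)` after expanding `(y + n - k)^(n - k)` binomially
around `x + y + n`.
-/

/-- Plane trees: nonempty rooted trees whose subtrees at each vertex are linearly ordered. -/
inductive PTree : Type
  | node : List PTree → PTree

namespace PTree

mutual
/-- The number of vertices of a plane tree. -/
def size : PTree → ℕ
  | .node cs => sizeList cs + 1
/-- The total number of vertices of a plane forest (a list of plane trees). -/
def sizeList : List PTree → ℕ
  | [] => 0
  | t :: ts => size t + sizeList ts
end

mutual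
/-- The multiset of hook lengths of a plane tree: the hook length of a vertex
is the number of its descendants, counting the vertex itself. -/
def hooks : PTree → Multiset ℕ+
  | .node cs => ⟨sizeList cs + 1, Nat.succ_pos _⟩ ::ₘ hooksList cs
/-- The multiset of hook lengths of a plane forest. -/
def hooksList : List PTree → Multiset ℕ+
  | [] => 0
  | t :: ts => hooks t + hooksList ts
end

end PTree

open Finset

lemma Nat.choose_mul_choose_sub_comm (n k j : ℕ) :
    n.choose k * (n - k).choose j = n.choose j * (n - j).choose k := by
  have hk := Nat.choose_mul (n := n) (Nat.le_add_right k j)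
  have hj := Nat.choose_mul (n := n) (Nat.le_add_left j k)
  rw [Nat.add_sub_cancel_left] at hk
  rw [Nat.add_sub_cancel] at hj
  rw [← hk, ← hj, Nat.choose_symm_add]

lemma sum_choose_mul_sum_choose_comm {R : Type*} [Semiring R] (n : ℕ) (f : ℕ → ℕ → R) :
    ∑ k ∈ range (n + 1), ∑ j ∈ range (n - k + 1),
        (n.choose k * (n - k).choose j : R) * f k j =
      ∑ j ∈ range (n + 1), ∑ k ∈ range (n - j + 1),
        (n.choose j * (n - j).choose k : R) * f k j := by
  refine sum_comm' (fun k j => ?_) |>.trans (sum_congr rfl fun j _ => sum_congr rfl fun k _ => ?_)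
  · simp only [mem_range]
    omega
  · rw [← Nat.cast_mul, ← Nat.cast_mul, Nat.choose_mul_choose_sub_comm]

section Abel

variable {R : Type*} [CommRing R]

def abelPoly (x : R) : ℕ → R
  | 0 => 1
  | k + 1 => x * (x + (k + 1)) ^ k

@[simp] lemma abelPoly_zero (x : R) : abelPoly x 0 = 1 := rfl

lemma abelPoly_succ (x : R) (k : ℕ) : abelPoly x (k + 1) = x * (x + (k + 1)) ^ k := rfl

lemma abelPoly_one (n : ℕ) : abelPoly (1 : R) n = (n + 1) ^ (n - 1) := by
  cases n <;> simp [abelPoly_succ, add_comm]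

lemma abelPoly_eq_pow_sub (y : R) (j : ℕ) :
    abelPoly y j = (y + j) ^ j - j * (y + j) ^ (j - 1) := by
  cases j with
  | zero => simp
  | succ j =>
    rw [abelPoly_succ]
    push_cast
    rw [pow_succ]
    ring

lemma abelPoly_mul_neg_pow (x : R) {k m : ℕ} (hk : k ≤ m) (hm : 1 ≤ m) :
    abelPoly x k * (-(x + k)) ^ (m - k) = (-1) ^ (m - k) * (x * (x + k) ^ (m - 1)) := by
  cases k with
  | zero =>
    rw [abelPoly_zero, Nat.cast_zero, add_zero, one_mul, Nat.sub_zero, neg_pow, ← pow_succ',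
      Nat.sub_add_cancel hm]
  | succ k =>
    rw [abelPoly_succ, neg_pow, show m - 1 = k + (m - (k + 1)) by omega, pow_add]
    push_cast
    ring

/-- `x` times the `m`-th forward difference of `r ↦ r ^ (m - 1)` at `x`. -/
lemma sum_choose_mul_abelPoly_mul_neg_pow (x : R) {m : ℕ} (hm : 1 ≤ m) :
    ∑ k ∈ range (m + 1), (m.choose k : R) * abelPoly x k * (-(x + k)) ^ (m - k) = 0 := by
  have hΔ := congr_fun (fwdDiff_iter_pow_eq_zero_of_lt (R := R) (Nat.sub_lt hm one_pos)) x
  rw [fwdDiff_iter_eq_sum_shift] at hΔ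
  calc _ = x * ∑ k ∈ range (m + 1),
        ((-1 : ℤ) ^ (m - k) * m.choose k) • (x + k • (1 : R)) ^ (m - 1) := by
        rw [mul_sum]
        refine sum_congr rfl fun k hk => ?_
        rw [mul_assoc, abelPoly_mul_neg_pow x (Nat.lt_succ_iff.mp (mem_range.mp hk)) hm]
        simp only [zsmul_eq_mul, nsmul_eq_mul, mul_one]
        push_cast
        ring
    _ = 0 := by rw [hΔ, Pi.zero_apply, mul_zero]

theorem sum_choose_mul_abelPoly_mul_pow (x y : R) (n : ℕ) :
    ∑ k ∈ range (n + 1), (n.choose k : R) * abelPoly x k * (y + (n - k : ℕ)) ^ (n - k) =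
      (x + y + n) ^ n := by
  set z := x + y + n
  calc _ = ∑ k ∈ range (n + 1), ∑ j ∈ range (n - k + 1),
        (n.choose k * (n - k).choose j : R) *
          (z ^ j * (abelPoly x k * (-(x + k)) ^ (n - j - k))) := by
        refine sum_congr rfl fun k hk => ?_
        have hk : k ≤ n := Nat.lt_succ_iff.mp (mem_range.mp hk)
        have hbase : y + ((n - k : ℕ) : R) = z + -(x + k) := by push_cast [hk, z]; ring
        rw [hbase, add_pow, mul_sum]
        refine sum_congr rfl fun j _ => ?_
        rw [show n - j - k = n - k - j by omega]
        ring
    _ = ∑ j ∈ range (n + 1), (n.choose j : R) * z ^ j *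
        ∑ k ∈ range (n - j + 1),
          ((n - j).choose k : R) * abelPoly x k * (-(x + k)) ^ (n - j - k) := by
        rw [sum_choose_mul_sum_choose_comm]
        refine sum_congr rfl fun j _ => ?_
        rw [mul_sum]
        exact sum_congr rfl fun k _ => by ring
    _ = z ^ n := by
        rw [sum_range_succ, sum_eq_zero fun j hj => by
          rw [sum_choose_mul_abelPoly_mul_neg_pow x (by have := mem_range.mp hj; omega), mul_zero]]
        simp

theorem sum_choose_mul_abelPoly_mul_abelPoly (x y : R) (n : ℕ) :
    ∑ k ∈ range (n + 1), (n.choose k : R) * abelPoly x k * abelPoly y (n - k) =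
      abelPoly (x + y) n := by
  cases n with
  | zero => simp
  | succ m =>
    have hdiff : ∑ k ∈ range (m + 2), ((m + 1).choose k : R) * abelPoly x k *
        (((m + 1 - k : ℕ) : R) * (y + (m + 1 - k : ℕ)) ^ (m + 1 - k - 1)) =
        (m + 1) * (x + (y + 1) + m) ^ m := by
      rw [← sum_choose_mul_abelPoly_mul_pow, mul_sum, sum_range_succ, Nat.sub_self,
        Nat.cast_zero, zero_mul, mul_zero, add_zero]
      refine sum_congr rfl fun k hk => ?_
      have hk : k ≤ m := Nat.lt_succ_iff.mp (mem_range.mp hk)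
      have hchoose : ((m + 1).choose k : R) * (m + 1 - k : ℕ) = m.choose k * (m + 1) := by
        rw [← Nat.cast_mul, ← Nat.choose_mul_succ_eq]
        push_cast
        ring
      have hbase : y + ((m + 1 - k : ℕ) : R) = y + 1 + (m - k : ℕ) := by
        push_cast [hk, Nat.le_succ_of_le hk]
        ring
      rw [show m + 1 - k - 1 = m - k by omega, hbase]
      linear_combination (abelPoly x k * (y + 1 + ((m - k : ℕ) : R)) ^ (m - k)) * hchoose
    calc _ = ∑ k ∈ range (m + 2), ((m + 1).choose k : R) * abelPoly x k *
            (y + (m + 1 - k : ℕ)) ^ (m + 1 - k) -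
          ∑ k ∈ range (m + 2), ((m + 1).choose k : R) * abelPoly x k *
            (((m + 1 - k : ℕ) : R) * (y + (m + 1 - k : ℕ)) ^ (m + 1 - k - 1)) := by
          rw [← sum_sub_distrib]
          simp only [abelPoly_eq_pow_sub y, mul_sub]
      _ = (x + y + (m + 1 : ℕ)) ^ (m + 1) - (m + 1) * (x + (y + 1) + m) ^ m := by
          rw [sum_choose_mul_abelPoly_mul_pow, hdiff]
      _ = abelPoly (x + y) (m + 1) := by
          rw [abelPoly_succ]
          push_cast
          ring

lemma abelPoly_one_succ (n : ℕ) :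
    abelPoly (1 : R) (n + 1) =
      ∑ a ∈ range (n + 1), ((n + 1).choose (a + 1) : R) * a ^ a * abelPoly 1 (n - a) := by
  have h := sum_choose_mul_abelPoly_mul_abelPoly (-1 : R) 1 (n + 1)
  have hterm : ∀ a ∈ range (n + 1), ((n + 1).choose (a + 1) : R) * abelPoly (-1) (a + 1) *
      abelPoly 1 (n + 1 - (a + 1)) =
        -(((n + 1).choose (a + 1) : R) * a ^ a * abelPoly 1 (n - a)) := by
    intro a _
    rw [abelPoly_succ, Nat.add_sub_add_right, show (-1 : R) + (a + 1) = a by ring]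
    ring
  rw [sum_range_succ', sum_congr rfl hterm, sum_neg_distrib, neg_add_cancel, abelPoly_succ,
    zero_mul] at h
  simp only [Nat.choose_zero_right, Nat.cast_one, abelPoly_zero, one_mul, Nat.sub_zero] at h
  linear_combination h

end Abel

section Field

variable {K : Type*} [Field K] [CharZero K]

lemma one_sub_inv_pow_mul_abelPoly_one (a : ℕ) :
    (1 - 1 / ((a : K) + 1)) ^ a * abelPoly 1 a = a ^ a / (a + 1) := by
  cases a with
  | zero => simp
  | succ a =>
    have hb : ((a + 1 : ℕ) : K) + 1 ≠ 0 := Nat.cast_add_one_ne_zero _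
    rw [abelPoly_one, add_tsub_cancel_right, one_sub_div hb, add_sub_cancel_right, div_pow,
      pow_succ _ a]
    field_simp
    ring

lemma abelPoly_one_div_factorial_succ (n : ℕ) :
    abelPoly (1 : K) (n + 1) / (n + 1).factorial =
      ∑ a ∈ range (n + 1), (1 - 1 / ((a : K) + 1)) ^ a * (abelPoly 1 a / a.factorial) *
        (abelPoly 1 (n - a) / (n - a).factorial) := by
  rw [abelPoly_one_succ, sum_div]
  refine sum_congr rfl fun a ha => ?_
  have ha : a + 1 ≤ n + 1 := by have := mem_range.mp ha; omega
  rw [Nat.cast_choose K ha, Nat.add_sub_add_right, ← mul_div_assoc, ← mul_div_assoc,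
    one_sub_inv_pow_mul_abelPoly_one]
  push_cast [Nat.factorial_succ]
  field_simp [Nat.factorial_ne_zero]

end Field

namespace PTree

@[simp] lemma size_node (cs : List PTree) : (node cs).size = sizeList cs + 1 := by rw [size]

@[simp] lemma sizeList_nil : sizeList [] = 0 := by rw [sizeList]

@[simp] lemma sizeList_cons (t : PTree) (ts : List PTree) :
    sizeList (t :: ts) = t.size + sizeList ts := by rw [sizeList]

lemma sizeList_eq_zero {l : List PTree} : sizeList l = 0 ↔ l = [] := by
  cases l with
  | nil => simp
  | cons t ts => cases t; simp

open Classical in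
noncomputable def forestsOfSize : ℕ → Finset (List PTree)
  | 0 => {[]}
  | n + 1 => (range (n + 1)).attach.biUnion fun m =>
      (forestsOfSize m ×ˢ forestsOfSize (n - m)).image fun p => node p.1 :: p.2
  decreasing_by
  · exact mem_range.mp m.2
  · omega

lemma mem_forestsOfSize {n : ℕ} {l : List PTree} : l ∈ forestsOfSize n ↔ sizeList l = n := by
  induction n using Nat.strong_induction_on generalizing l with
  | _ n ih =>
    cases n with
    | zero => simp [forestsOfSize, sizeList_eq_zero]
    | succ n =>
      rw [forestsOfSize]
      simp only [mem_biUnion, mem_attach, true_and, mem_image, mem_product, Subtype.exists,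
        mem_range, Prod.exists]
      constructor
      · rintro ⟨m, hm, c, l', ⟨hc, hl'⟩, rfl⟩
        rw [ih m (by omega)] at hc
        rw [ih (n - m) (by omega)] at hl'
        simp only [sizeList_cons, size_node]
        omega
      · intro hl
        obtain _ | ⟨⟨c⟩, l'⟩ := l
        · simp at hl
        · simp only [sizeList_cons, size_node] at hl
          exact ⟨sizeList c, by omega, c, l',
            ⟨(ih _ (by omega)).mpr rfl, (ih _ (by omega)).mpr (by omega)⟩, rfl⟩

lemma sum_forestsOfSize_succ {M : Type*} [AddCommMonoid M] (f : List PTree → M) (n : ℕ) :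
    ∑ l ∈ forestsOfSize (n + 1), f l =
      ∑ m ∈ range (n + 1), ∑ c ∈ forestsOfSize m, ∑ l ∈ forestsOfSize (n - m),
        f (node c :: l) := by
  classical
  rw [forestsOfSize, sum_biUnion, ← sum_attach (range (n + 1))]
  · refine sum_congr rfl fun m _ => ?_
    rw [sum_image fun p _ q _ h => ?_, sum_product]
    simp only [List.cons.injEq, node.injEq] at h
    exact Prod.ext h.1 h.2
  · intro m _ m' _ hne
    simp only [Function.onFun, disjoint_left, mem_image, mem_product, not_exists, not_and,
      Prod.exists]
    rintro _ ⟨c, l, ⟨hc, -⟩, rfl⟩ c' l' ⟨hc', -⟩ h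
    simp only [List.cons.injEq, node.injEq] at h
    rw [mem_forestsOfSize] at hc hc'
    exact hne (Subtype.ext (hc.symm.trans (h.1 ▸ hc')))

lemma finsum_sizeList_eq_sum {M : Type*} [AddCommMonoid M] (f : List PTree → M) (n : ℕ) :
    ∑ᶠ F : {l : List PTree // sizeList l = n}, f F = ∑ l ∈ forestsOfSize n, f l := by
  simp_rw [finsum_subtype_eq_finsum_cond, ← mem_forestsOfSize]
  exact finsum_mem_finset_eq_sum f _

lemma hooks_node (cs : List PTree) :
    hooks (node cs) = (sizeList cs).succPNat ::ₘ hooksList cs := by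
  rw [hooks]
  rfl

def hookWeight (l : List PTree) : ℚ :=
  ((hooksList l).map fun h : ℕ+ => (1 - 1 / (h : ℚ)) ^ ((h : ℕ) - 1)).prod

lemma hookWeight_nil : hookWeight [] = 1 := by
  simp [hookWeight, hooksList]

lemma hookWeight_node_cons (c l : List PTree) :
    hookWeight (node c :: l) =
      (1 - 1 / ((sizeList c : ℚ) + 1)) ^ sizeList c * hookWeight c * hookWeight l := by
  rw [hookWeight, hooksList, hooks_node, Multiset.map_add, Multiset.prod_add, Multiset.map_cons,
    Multiset.prod_cons, hookWeight, hookWeight, Nat.succPNat_coe, Nat.succ_sub_one, Nat.cast_succ]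

lemma sum_hookWeight_forestsOfSize (n : ℕ) :
    ∑ l ∈ forestsOfSize n, hookWeight l = abelPoly 1 n / n.factorial := by
  induction n using Nat.strong_induction_on with
  | _ n ih =>
    cases n with
    | zero => simp [forestsOfSize, hookWeight_nil]
    | succ n =>
      rw [sum_forestsOfSize_succ, abelPoly_one_div_factorial_succ]
      refine sum_congr rfl fun m hm => ?_
      have hm := mem_range.mp hm
      rw [← ih m (by omega), ← ih (n - m) (by omega), mul_sum (forestsOfSize m), sum_mul_sum]
      refine sum_congr rfl fun c hc => sum_congr rfl fun l _ => ?_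
      rw [hookWeight_node_cons, mem_forestsOfSize.mp hc]

end PTree

/-- A hook length formula for plane forests. -/
theorem hook_formula_plane_forests_power (n : ℕ) (hn : 1 ≤ n) :
    (n.factorial : ℚ) *
      ∑ᶠ F : {l : List PTree // PTree.sizeList l = n},
        (PTree.hooksList (F : List PTree) |>.map fun (h : ℕ+) =>
          (1 - 1 / (h : ℚ)) ^ ((h : ℕ) - 1)).prod
    = ((n : ℚ) + 1) ^ (n - 1) := by
  change (n.factorial : ℚ) *
    ∑ᶠ F : {l : List PTree // PTree.sizeList l = n}, PTree.hookWeight F = _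
  rw [PTree.finsum_sizeList_eq_sum, PTree.sum_hookWeight_forestsOfSize, abelPoly_one,
    mul_div_cancel₀ _ (Nat.cast_ne_zero.mpr n.factorial_ne_zero)]
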